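/- Let x^k be feasible for the constraint ∑φ((b_i-a_iᵀx)²) ≤ σ, and define A_k = Diag(v^k)A, b^k = v^k ∘ b with v^k_i = √(φ'₊((b_i-a_iᵀx^k)²)), and σ_k = σ + ‖b^k - A_k x^k‖² - ∑φ((b_i-a_iᵀx^k)²). For any x ∈ ℝ^n define P_k(x) = x if ‖A_kx - b^k‖² ≤ σ_k, and P_k(x) = (1 - √σ_k/‖A_kx - b^k‖) A†b + (√σ_k/‖A_kx - b^k‖) x otherwise. Then for every x ∈ ℝ^n, P_k(x) is feasible: ∑_{i=1}^m φ((b_i - a_iᵀP_k(x))²) ≤ σ. -/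

import Mathlib

/-!
For concave `φ` with right derivative `φ'₊`, the tangent line at `t = (bᵢ - aᵢᵀxᵏ)²` lies above
the graph on `[0, ∞)`, so with `vᵢ² = φ'₊(t)` the constraint function is majorized by the
weighted least-squares model:
`∑ φ((bᵢ - aᵢᵀy)²) ≤ ∑ φ((bᵢ - aᵢᵀxᵏ)²) + ‖Aₖy - bᵏ‖² - ‖Aₖxᵏ - bᵏ‖²`.
By the definition of `σₖ`, every `y` with `‖Aₖy - bᵏ‖² ≤ σₖ` is therefore feasible. The retraction produces such a point: since
`A (A†b) = b`, moving from `x` towards `A†b` scales the residual `Aₖx - bᵏ` by the factor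
`α = √σₖ / ‖Aₖx - bᵏ‖`, which brings its squared norm down to exactly `σₖ`.
-/

open Set

namespace ConcaveOn

variable {S : Set ℝ} {f : ℝ → ℝ} {x y f' : ℝ}

lemma le_slope_of_hasDerivWithinAt_Ioi_of_mem_interior (hfc : ConcaveOn ℝ S f) (hx : x ∈ S)
    (hy : y ∈ interior S) (hxy : x < y) (hf' : HasDerivWithinAt f f' (Ioi y) y) :
    f' ≤ slope f x y := by
  have hleft := hfc.neg.slope_le_leftDeriv_of_mem_interior hx hy hxy
  have hleft_right := hfc.neg.leftDeriv_le_rightDeriv_of_mem_interior hy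
  have hright : derivWithin (-f) (Ioi y) y = -f' := hf'.neg.derivWithin (uniqueDiffWithinAt_Ioi y)
  simp only [slope_neg_fun, Pi.neg_apply] at hleft
  linarith

lemma le_add_mul_sub_of_hasDerivWithinAt_Ioi {c : ℝ} (hfc : ConcaveOn ℝ (Ici c) f)
    (hx : c ≤ x) (hy : c ≤ y) (hf' : HasDerivWithinAt f f' (Ioi y) y) :
    f x ≤ f y + f' * (x - y) := by
  rcases lt_trichotomy x y with hxy | rfl | hyx
  · have hy' : y ∈ interior (Ici c) := by rw [interior_Ici]; exact hx.trans_lt hxy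
    have h := hfc.le_slope_of_hasDerivWithinAt_Ioi_of_mem_interior hx hy' hxy hf'
    rw [slope_def_field, le_div_iff₀ (sub_pos.2 hxy)] at h
    linarith
  · simp
  · have h := hfc.slope_le_of_hasDerivWithinAt_Ioi hy hx hyx hf'
    rw [slope_def_field, div_le_iff₀ (sub_pos.2 hyx)] at h
    linarith

end ConcaveOn

section WeightedResidual

variable {ι κ : Type*} [Fintype ι] [Fintype κ] (a : ι → κ → ℝ) (b v : ι → ℝ)

lemma sum_comp_sq_residual_le_of_concaveOn {φ D : ℝ → ℝ} (xk y : κ → ℝ)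
    (hconc : ConcaveOn ℝ (Ici 0) φ)
    (hderiv : ∀ t ∈ Ici (0 : ℝ), HasDerivWithinAt φ (D t) (Ici t) t)
    (hv : ∀ i, v i ^ 2 = D ((b i - ∑ j, a i j * xk j) ^ 2)) :
    ∑ i, φ ((b i - ∑ j, a i j * y j) ^ 2) ≤ ∑ i, φ ((b i - ∑ j, a i j * xk j) ^ 2)
      + ∑ i, (v i * ∑ j, a i j * y j - v i * b i) ^ 2
      - ∑ i, (v i * b i - v i * ∑ j, a i j * xk j) ^ 2 := by
  have htangent : ∀ i ∈ Finset.univ, φ ((b i - ∑ j, a i j * y j) ^ 2)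
      ≤ φ ((b i - ∑ j, a i j * xk j) ^ 2) + ((v i * ∑ j, a i j * y j - v i * b i) ^ 2
        - (v i * b i - v i * ∑ j, a i j * xk j) ^ 2) := fun i _ => by
    have h := hconc.le_add_mul_sub_of_hasDerivWithinAt_Ioi
      (sq_nonneg (b i - ∑ j, a i j * y j)) (sq_nonneg (b i - ∑ j, a i j * xk j))
      ((hderiv _ (mem_Ici.2 (sq_nonneg _))).mono Ioi_subset_Ici_self)
    rw [← hv i] at h
    linarith
  have h := Finset.sum_le_sum htangent
  rw [Finset.sum_add_distrib, Finset.sum_sub_distrib] at h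
  linarith

lemma sum_sq_weighted_residual_lineMap {xdag : κ → ℝ} (hxdag : ∀ i, ∑ j, a i j * xdag j = b i)
    (α : ℝ) (x : κ → ℝ) :
    ∑ i, (v i * ∑ j, a i j * ((1 - α) * xdag j + α * x j) - v i * b i) ^ 2
      = α ^ 2 * ∑ i, (v i * ∑ j, a i j * x j - v i * b i) ^ 2 := by
  rw [Finset.mul_sum]
  refine Finset.sum_congr rfl fun i _ => ?_
  have hrow : ∑ j, a i j * ((1 - α) * xdag j + α * x j) = (1 - α) * b i + α * ∑ j, a i j * x j := by
    rw [← hxdag i, Finset.mul_sum, Finset.mul_sum, ← Finset.sum_add_distrib]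
    exact Finset.sum_congr rfl fun j _ => by ring
  rw [hrow]
  ring

end WeightedResidual

theorem retraction_feasible_general
    (m n : ℕ) (φ D : ℝ → ℝ)
    (a : Fin m → Fin n → ℝ) (b : Fin m → ℝ) (σ : ℝ)
    (xk xdag : Fin n → ℝ) (v : Fin m → ℝ) (σk : ℝ)
    (P : (Fin n → ℝ) → (Fin n → ℝ))
    (hconc : ConcaveOn ℝ (Set.Ici 0) φ)
    (hderiv : ∀ t ∈ Set.Ici (0:ℝ), HasDerivWithinAt φ (D t) (Set.Ici t) t)
    (hDnonneg : ∀ t ∈ Set.Ici (0:ℝ), 0 ≤ D t)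
    (hxdag : ∀ i, ∑ j, a i j * xdag j = b i)
    (hv : ∀ i, v i = Real.sqrt (D ((b i - ∑ j, a i j * xk j) ^ 2)))
    (hσk : σk = σ + (∑ i, (v i * b i - v i * ∑ j, a i j * xk j) ^ 2)
        - ∑ i, φ ((b i - ∑ j, a i j * xk j) ^ 2))
    (hσkpos : 0 < σk)
    (hP : ∀ x : Fin n → ℝ, P x =
      if (∑ i, (v i * (∑ j, a i j * x j) - v i * b i) ^ 2) ≤ σk then x
      else fun j =>
        (1 - Real.sqrt σk /
            Real.sqrt (∑ i, (v i * (∑ j', a i j' * x j') - v i * b i) ^ 2)) * xdag j +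
        (Real.sqrt σk /
            Real.sqrt (∑ i, (v i * (∑ j', a i j' * x j') - v i * b i) ^ 2)) * x j) :
    ∀ x : Fin n → ℝ, ∑ i, φ ((b i - ∑ j, a i j * (P x) j) ^ 2) ≤ σ := by
  intro x
  have hv_sq : ∀ i, v i ^ 2 = D ((b i - ∑ j, a i j * xk j) ^ 2) := fun i => by
    rw [hv i, Real.sq_sqrt (hDnonneg _ (mem_Ici.2 (sq_nonneg _)))]
  have hPx : ∑ i, (v i * ∑ j, a i j * P x j - v i * b i) ^ 2 ≤ σk := by
    rw [hP x]
    split_ifs with hx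
    · exact hx
    · have hr : 0 < ∑ i, (v i * ∑ j, a i j * x j - v i * b i) ^ 2 := hσkpos.trans (not_le.1 hx)
      rw [sum_sq_weighted_residual_lineMap a b v hxdag, div_pow, Real.sq_sqrt hσkpos.le,
        Real.sq_sqrt hr.le, div_mul_cancel₀ _ hr.ne']
  linarith [sum_comp_sq_residual_le_of_concaveOn a b v xk (P x) hconc hderiv hv_sq]

/-- Lemma 3.1(ii): with `v i = √(φ'₊((bᵢ-aᵢᵀxk)²))`, scaled data
`Ak = Diag(v)A`, `bk = v ∘ b`, and `σk = σ + ‖bk - Ak xk‖² - ∑ φ((bᵢ-aᵢᵀxk)²) > 0`,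
the retraction `P` maps every point into the feasible set of the original constraint.
`D` is the right derivative of `φ` and `xdag = A†b` satisfies `A xdag = b`. -/
theorem retraction_feasible
    (m n : ℕ) (φ D : ℝ → ℝ)
    (a : Fin m → Fin n → ℝ) (b : Fin m → ℝ) (σ : ℝ)
    (xk xdag : Fin n → ℝ) (v : Fin m → ℝ) (σk : ℝ)
    (P : (Fin n → ℝ) → (Fin n → ℝ))
    (hcont : ContinuousOn φ (Set.Ici 0))
    (hconc : ConcaveOn ℝ (Set.Ici 0) φ)
    (h0 : φ 0 = 0)
    (hnonneg : ∀ t ∈ Set.Ici (0:ℝ), 0 ≤ φ t)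
    (hderiv : ∀ t ∈ Set.Ici (0:ℝ), HasDerivWithinAt φ (D t) (Set.Ici t) t)
    (hDnonneg : ∀ t ∈ Set.Ici (0:ℝ), 0 ≤ D t)
    (hxdag : ∀ i, ∑ j, a i j * xdag j = b i)
    (hfeas : ∑ i, φ ((b i - ∑ j, a i j * xk j) ^ 2) ≤ σ)
    (hv : ∀ i, v i = Real.sqrt (D ((b i - ∑ j, a i j * xk j) ^ 2)))
    (hσk : σk = σ + (∑ i, (v i * b i - v i * ∑ j, a i j * xk j) ^ 2)
        - ∑ i, φ ((b i - ∑ j, a i j * xk j) ^ 2))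
    (hσkpos : 0 < σk)
    (hP : ∀ x : Fin n → ℝ, P x =
      if (∑ i, (v i * (∑ j, a i j * x j) - v i * b i) ^ 2) ≤ σk then x
      else fun j =>
        (1 - Real.sqrt σk /
            Real.sqrt (∑ i, (v i * (∑ j', a i j' * x j') - v i * b i) ^ 2)) * xdag j +
        (Real.sqrt σk /
            Real.sqrt (∑ i, (v i * (∑ j', a i j' * x j') - v i * b i) ^ 2)) * x j) :
    ∀ x : Fin n → ℝ, ∑ i, φ ((b i - ∑ j, a i j * (P x) j) ^ 2) ≤ σ :=
  retraction_feasible_general m n φ D a b σ xk xdag v σk P hconc hderiv hDnonneg hxdag hv hσk hσkpos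
    hP
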